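/- For any symmetric hollow matrix D, the (i,j) entry of Δ^T Δ D equals 2(n−1) D_{ij} − Σ_{k≠i} D_{ik} − Σ_{k≠j} D_{jk}. -/

import Mathlib

/-!
Both sides split as sums over the rows `i`. For a fixed row, the triplet sum is Lagrange's
identity `∑_{j<k} (a_j - a_k)(b_j - b_k) = m ∑ a_j b_j - (∑ a_j)(∑ b_j)` over the `m = n - 1`
indices `j ≠ i`. On the other side, symmetry of `D` and `E` turns the sum over pairs `i < j`
into the sum over all ordered pairs `i ≠ j` of `((n - 1) D_ij - ∑_{k≠i} D_ik) E_ij`, which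
regroups by rows into the same expression.
-/

open Matrix BigOperators Finset

/-- The set of all triplets `(i,j,k)` with distinct indices and `j < k`. -/
def tripletSet (n : ℕ) : Finset (Fin n × Fin n × Fin n) :=
  Finset.univ.filter fun t => t.1 ≠ t.2.1 ∧ t.1 ≠ t.2.2 ∧ t.2.1 < t.2.2

namespace Finset

variable {ι M R : Type*} [LinearOrder ι]

theorem sum_offDiag_eq_sum_filter_lt_add_swap [AddCommMonoid M] (s : Finset ι)
    (g : ι → ι → M) :
    ∑ p ∈ s.offDiag, g p.1 p.2 = ∑ p ∈ s.offDiag with p.1 < p.2, (g p.1 p.2 + g p.2 p.1) := by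
  rw [sum_add_distrib, ← sum_filter_add_sum_filter_not s.offDiag (fun p => p.1 < p.2)]
  congr 1
  refine sum_nbij' Prod.swap Prod.swap ?_ ?_ (by simp) (by simp) (by simp)
  all_goals
    simp only [mem_filter, mem_offDiag, Prod.fst_swap, Prod.snd_swap]
    grind

theorem sum_offDiag_filter_lt_sub_mul_sub [CommRing R] (s : Finset ι) (a b : ι → R) :
    ∑ p ∈ s.offDiag with p.1 < p.2, (a p.1 - a p.2) * (b p.1 - b p.2) =
      #s • ∑ i ∈ s, a i * b i - (∑ i ∈ s, a i) * ∑ i ∈ s, b i := by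
  have hsymm : ∀ i j, (a i - a j) * (b i - b j) =
      (a i * b i - a i * b j) + (a j * b j - a j * b i) := fun i j => by ring
  have hdiag : ∑ p ∈ s.offDiag, (a p.1 * b p.1 - a p.1 * b p.2) =
      ∑ p ∈ s ×ˢ s, (a p.1 * b p.1 - a p.1 * b p.2) := by
    refine sum_subset (fun p hp => ?_) (fun p hp hp' => ?_)
    · obtain ⟨hp₁, hp₂, -⟩ := mem_offDiag.1 hp
      exact mem_product.2 ⟨hp₁, hp₂⟩
    · have : p.1 = p.2 := by simpa [mem_offDiag, mem_product.1 hp] using hp'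
      rw [this, sub_self]
  simp_rw [hsymm]
  rw [← sum_offDiag_eq_sum_filter_lt_add_swap s (fun i j => a i * b i - a i * b j), hdiag,
    sum_product, sum_mul_sum]
  simp_rw [sum_sub_distrib, sum_const, smul_sum]

end Finset

theorem sum_tripletSet {M : Type*} [AddCommMonoid M] (n : ℕ) (f : Fin n × Fin n × Fin n → M) :
    ∑ t ∈ tripletSet n, f t = ∑ i, ∑ p ∈ (univ.erase i).offDiag with p.1 < p.2, f (i, p) := by
  refine sum_finset_product _ _ _ fun t => ?_
  simp only [tripletSet, mem_filter, mem_univ, true_and, mem_offDiag, mem_erase]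
  grind

theorem deltaT_delta_entry (n : ℕ)
    (D E : Matrix (Fin n) (Fin n) ℝ)
    (hDsym : Dᵀ = D)
    (hEsym : Eᵀ = E) :
    ∑ t ∈ tripletSet n,
        (D t.1 t.2.1 - D t.1 t.2.2) * (E t.1 t.2.1 - E t.1 t.2.2) =
      ∑ p ∈ (Finset.univ.filter fun p : Fin n × Fin n => p.1 < p.2),
        (2 * ((n : ℝ) - 1) * D p.1 p.2
          - ∑ k ∈ Finset.univ.filter (· ≠ p.1), D p.1 k
          - ∑ k ∈ Finset.univ.filter (· ≠ p.2), D p.2 k) * E p.1 p.2 := by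
  have hD : ∀ i j, D j i = D i j := fun i j => congrFun (congrFun hDsym i) j
  have hE : ∀ i j, E j i = E i j := fun i j => congrFun (congrFun hEsym i) j
  have hcard : ∀ i : Fin n, ((univ.erase i).card : ℝ) = n - 1 := fun i => by
    rw [card_erase_of_mem (mem_univ i), card_univ, Fintype.card_fin, Nat.cast_pred i.pos]
  have hpairs : (univ.filter fun p : Fin n × Fin n => p.1 < p.2) =
      univ.offDiag.filter fun p => p.1 < p.2 := by
    ext p
    simp only [mem_filter, mem_univ, true_and, mem_offDiag]
    exact ⟨fun h => ⟨h.ne, h⟩, And.right⟩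
  calc _ = ∑ i, (((n : ℝ) - 1) * ∑ j ∈ univ.erase i, D i j * E i j
          - (∑ j ∈ univ.erase i, D i j) * ∑ j ∈ univ.erase i, E i j) := by
        simp_rw [sum_tripletSet, sum_offDiag_filter_lt_sub_mul_sub, nsmul_eq_mul, hcard]
    _ = ∑ p ∈ univ.offDiag,
          (((n : ℝ) - 1) * D p.1 p.2 - ∑ k ∈ univ.erase p.1, D p.1 k) * E p.1 p.2 := by
        rw [sum_finset_product _ univ (fun i => univ.erase i) (by simp [mem_offDiag, eq_comm])]
        simp_rw [sub_mul, sum_sub_distrib, mul_sum, mul_assoc]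
    _ = _ := by
        rw [sum_offDiag_eq_sum_filter_lt_add_swap _
          (fun i j => (((n : ℝ) - 1) * D i j - ∑ k ∈ univ.erase i, D i k) * E i j), hpairs]
        simp_rw [filter_ne']
        refine sum_congr rfl fun p _ => ?_
        rw [hD p.1 p.2, hE p.1 p.2]
        ring
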